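/- arXiv:2601.06917 — 2 statements merged into one kernel-verified Lean document; each statement's English description precedes it below -/
import Mathlib

section
/- Let b, τ be real numbers with sin(b·τ) ≠ 0, let z ∈ ℂ, and let v : ℝ → ℝ satisfy v(t) − 2·Re(e^{ibt}·z) − t^{−1/2}·|z|² = O(t^{−1}) as t → ∞. Define z̃ : ℝ → ℂ by z̃(t) := (v(t+τ)·e^{−ibt} − v(t)·e^{−ib(t+τ)}) / (2i·sin(bτ)), and define ẑ : ℝ → ℂ by ẑ(t) := (W₂(t)·e^{−ibt} − W₁(t)·e^{−ib(t+τ)}) / (2i·sin(bτ)), where W₁(t) := v(t) − t^{−1/2}·|z̃(t)|² and W₂(t) := v(t+τ) − (t+τ)^{−1/2}·|z̃(t)|². Then z̃(t) − z = O(t^{−1/2}) and ẑ(t) − z = O(t^{−1}) as t → ∞. -/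
/-!
Write `s(t) = 2·Re(e^{ibt} z)`. The two-point inversion
`(a₂ e^{-ibt} - a₁ e^{-ib(t+τ)}) / (2i sin bτ)` is ℝ-linear in `(a₁, a₂)`, returns `z`
exactly on the pair `(s(t), s(t+τ))`, and is bounded by `(|a₁| + |a₂|) / (2|sin bτ|)`
because the phases have modulus one. Hence the inversion error is of the order of the
error in the data. For `v` that error is dominated by the quadratic term `t^{-1/2}|z|²`,
so `z̃ - z = O(t^{-1/2})`. After subtracting `t^{-1/2}|z̃|²` it becomes the `O(t^{-1})`
remainder plus `t^{-1/2}(|z|² - |z̃|²)`, and `|z|² - |z̃|² = O(|z̃ - z|) = O(t^{-1/2})`.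
-/

open Filter Asymptotics

noncomputable def harmonicSignal (b : ℝ) (z : ℂ) (t : ℝ) : ℝ :=
  2 * (Complex.exp (Complex.I * (b * t)) * z).re

noncomputable def twoPointInversion (b τ a₁ a₂ t : ℝ) : ℂ :=
  ((a₂ : ℂ) * Complex.exp (-(Complex.I * (b * t)))
    - (a₁ : ℂ) * Complex.exp (-(Complex.I * (b * (t + τ)))))
    / (2 * Complex.I * (Real.sin (b * τ) : ℂ))

lemma ofReal_two_mul_re_mul_of_norm_eq_one {u : ℂ} (hu : ‖u‖ = 1) (z : ℂ) :
    ((2 * (u * z).re : ℝ) : ℂ) = u * z + u⁻¹ * (starRingEnd ℂ) z := by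
  rw [← Complex.add_conj, map_mul, Complex.inv_def, Complex.normSq_eq_norm_sq, hu]
  simp

lemma two_mul_I_mul_sin (x : ℂ) :
    2 * Complex.I * Complex.sin x
      = Complex.exp (Complex.I * x) - (Complex.exp (Complex.I * x))⁻¹ := by
  rw [← Complex.exp_neg, Complex.sin]
  ring_nf
  rw [Complex.I_sq]
  ring

lemma norm_exp_I_mul_ofReal_mul (b t : ℝ) : ‖Complex.exp (Complex.I * (b * t))‖ = 1 := by
  simp [Complex.norm_exp]

lemma twoPointInversion_harmonicSignal {b τ : ℝ} (hτ : Real.sin (b * τ) ≠ 0) (z : ℂ)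
    (t : ℝ) :
    twoPointInversion b τ (harmonicSignal b z t) (harmonicSignal b z (t + τ)) t = z := by
  have hsin : (2 * Complex.I * (Real.sin (b * τ) : ℂ)) ≠ 0 :=
    mul_ne_zero (mul_ne_zero two_ne_zero Complex.I_ne_zero) (Complex.ofReal_ne_zero.mpr hτ)
  rw [twoPointInversion, div_eq_iff hsin, harmonicSignal, harmonicSignal,
    ofReal_two_mul_re_mul_of_norm_eq_one (norm_exp_I_mul_ofReal_mul _ _),
    ofReal_two_mul_re_mul_of_norm_eq_one (norm_exp_I_mul_ofReal_mul _ _), Complex.ofReal_sin,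
    Complex.ofReal_mul, two_mul_I_mul_sin, Complex.exp_neg, Complex.exp_neg, Complex.ofReal_add]
  set u := Complex.exp (Complex.I * (b * t))
  set w := Complex.exp (Complex.I * (b * τ))
  have hshift : Complex.exp (Complex.I * (b * (t + τ))) = u * w := by
    rw [← Complex.exp_add]; ring_nf
  have hu : u ≠ 0 := Complex.exp_ne_zero _
  have hw : w ≠ 0 := Complex.exp_ne_zero _
  rw [hshift]
  field_simp
  ring

lemma twoPointInversion_sub (b τ a₁ a₂ c₁ c₂ t : ℝ) :
    twoPointInversion b τ (a₁ - c₁) (a₂ - c₂) t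
      = twoPointInversion b τ a₁ a₂ t - twoPointInversion b τ c₁ c₂ t := by
  simp only [twoPointInversion]
  push_cast
  ring

lemma twoPointInversion_sub_eq {b τ : ℝ} (hτ : Real.sin (b * τ) ≠ 0) (z : ℂ)
    (a₁ a₂ t : ℝ) :
    twoPointInversion b τ a₁ a₂ t - z = twoPointInversion b τ
      (a₁ - harmonicSignal b z t) (a₂ - harmonicSignal b z (t + τ)) t := by
  rw [twoPointInversion_sub, twoPointInversion_harmonicSignal hτ]

lemma norm_twoPointInversion_le (b τ a₁ a₂ t : ℝ) :
    ‖twoPointInversion b τ a₁ a₂ t‖ ≤ (|a₁| + |a₂|) / (2 * |Real.sin (b * τ)|) := by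
  have hden : ‖2 * Complex.I * (Real.sin (b * τ) : ℂ)‖ = 2 * |Real.sin (b * τ)| := by
    rw [norm_mul, norm_mul, Complex.norm_I, Complex.norm_real, Real.norm_eq_abs]
    norm_num
  rw [twoPointInversion, norm_div, hden]
  gcongr
  calc _ ≤ ‖(a₂ : ℂ) * Complex.exp (-(Complex.I * (b * t)))‖
          + ‖(a₁ : ℂ) * Complex.exp (-(Complex.I * (b * (t + τ))))‖ := norm_sub_le _ _
    _ = |a₁| + |a₂| := by simp [Complex.norm_exp, Complex.norm_real, add_comm]

lemma isBigO_twoPointInversion {b τ : ℝ} {l : Filter ℝ} {e₁ e₂ g : ℝ → ℝ}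
    (h₁ : e₁ =O[l] g) (h₂ : e₂ =O[l] g) :
    (fun t => twoPointInversion b τ (e₁ t) (e₂ t) t) =O[l] g := by
  refine (IsBigO.of_bound (2 * |Real.sin (b * τ)|)⁻¹ ?_).trans (h₁.abs_left.add h₂.abs_left)
  filter_upwards with t
  rw [Real.norm_of_nonneg (by positivity), ← div_eq_inv_mul]
  exact norm_twoPointInversion_le b τ (e₁ t) (e₂ t) t

lemma isBigO_twoPointInversion_sub {b τ : ℝ} (hτ : Real.sin (b * τ) ≠ 0) (z : ℂ)
    {l : Filter ℝ} {a₁ a₂ g : ℝ → ℝ}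
    (h₁ : (fun t => a₁ t - harmonicSignal b z t) =O[l] g)
    (h₂ : (fun t => a₂ t - harmonicSignal b z (t + τ)) =O[l] g) :
    (fun t => twoPointInversion b τ (a₁ t) (a₂ t) t - z) =O[l] g := by
  simpa only [twoPointInversion_sub_eq hτ] using isBigO_twoPointInversion h₁ h₂

lemma Asymptotics.IsBigO.norm_sq_sub_norm_sq {α E : Type*} [SeminormedAddCommGroup E]
    {l : Filter α} {w : α → E} {z : E} {g : α → ℝ}
    (hw : (fun t => w t - z) =O[l] g) (hg : g =O[l] fun _ => (1 : ℝ)) :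
    (fun t => ‖z‖ ^ 2 - ‖w t‖ ^ 2) =O[l] g := by
  have hdiff : (fun t => ‖z‖ - ‖w t‖) =O[l] g := by
    refine (IsBigO.of_bound 1 (Eventually.of_forall fun t => ?_)).trans hw
    rw [one_mul, Real.norm_eq_abs, abs_sub_comm]
    exact abs_norm_sub_norm_le (w t) z
  have hbdd : w =O[l] fun _ => (1 : ℝ) :=
    ((hw.trans hg).add (isBigO_const_const z one_ne_zero l)).congr_left fun t => sub_add_cancel _ _
  have hsum : (fun t => ‖z‖ + ‖w t‖) =O[l] fun _ => (1 : ℝ) :=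
    (isBigO_const_const ‖z‖ one_ne_zero l).add hbdd.norm_left
  exact (hdiff.mul hsum).congr (fun t => by ring) fun t => mul_one _

lemma rpow_isBigO_rpow_of_le {p q : ℝ} (h : p ≤ q) :
    (fun t : ℝ => t ^ p) =O[atTop] fun t => t ^ q := by
  refine IsBigO.of_bound 1 ?_
  filter_upwards [eventually_ge_atTop 1] with t ht
  rw [one_mul, Real.norm_of_nonneg (Real.rpow_nonneg (by linarith) p),
    Real.norm_of_nonneg (Real.rpow_nonneg (by linarith) q)]
  exact Real.rpow_le_rpow_of_exponent_le ht h

lemma Asymptotics.IsBigO.comp_add_const_rpow {E : Type*} [Norm E] {f : ℝ → E} {s : ℝ}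
    (hf : f =O[atTop] fun t => t ^ s) (τ : ℝ) :
    (fun t => f (t + τ)) =O[atTop] fun t => t ^ s := by
  have hequiv : (fun t : ℝ => t + τ) ~[atTop] id :=
    IsEquivalent.refl.add_const_of_norm_tendsto_atTop tendsto_norm_atTop_atTop
  have hpos : ∀ᶠ t : ℝ in atTop, 0 ≤ t := eventually_ge_atTop 0
  have hpos' : ∀ᶠ t : ℝ in atTop, 0 ≤ t + τ := by
    filter_upwards [eventually_ge_atTop (-τ)] with t ht
    linarith
  exact (hf.comp_tendsto (tendsto_atTop_add_const_right atTop τ tendsto_id)).trans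
    (hequiv.isTheta.rpow hpos' hpos).isBigO

/-- Revised two-point phase retrieval: if
`v(t) = 2·Re(e^{ibt}·z) + t^{-1/2}·|z|² + O(t^{-1})` and `sin(bτ) ≠ 0`, then a first
two-point inversion `z̃` recovers `z` up to `O(t^{-1/2})`, and after subtracting the
estimated quadratic term `t^{-1/2}·|z̃(t)|²`, a second inversion `ẑ` recovers `z` up
to `O(t^{-1})`. -/
theorem revised_twoPoint_phase_retrieval
    (b τ : ℝ) (hτ : Real.sin (b * τ) ≠ 0) (z : ℂ) (v : ℝ → ℝ)
    (hv : (fun t : ℝ => v t - 2 * (Complex.exp (Complex.I * (b * t)) * z).re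
            - t ^ (-(1 / 2 : ℝ)) * ‖z‖ ^ 2)
        =O[atTop] fun t : ℝ => t ^ (-1 : ℝ))
    (ztilde zhat : ℝ → ℂ) (W₁ W₂ : ℝ → ℝ)
    (hzt : ∀ t : ℝ, ztilde t =
      ((v (t + τ) : ℂ) * Complex.exp (-(Complex.I * (b * t)))
        - (v t : ℂ) * Complex.exp (-(Complex.I * (b * (t + τ)))))
        / (2 * Complex.I * (Real.sin (b * τ) : ℂ)))
    (hW₁ : ∀ t : ℝ, W₁ t = v t - t ^ (-(1 / 2 : ℝ)) * ‖ztilde t‖ ^ 2)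
    (hW₂ : ∀ t : ℝ, W₂ t = v (t + τ) - (t + τ) ^ (-(1 / 2 : ℝ)) * ‖ztilde t‖ ^ 2)
    (hzh : ∀ t : ℝ, zhat t =
      ((W₂ t : ℂ) * Complex.exp (-(Complex.I * (b * t)))
        - (W₁ t : ℂ) * Complex.exp (-(Complex.I * (b * (t + τ)))))
        / (2 * Complex.I * (Real.sin (b * τ) : ℂ))) :
    ((fun t : ℝ => ztilde t - z) =O[atTop] fun t : ℝ => t ^ (-(1 / 2 : ℝ))) ∧
    ((fun t : ℝ => zhat t - z) =O[atTop] fun t : ℝ => t ^ (-1 : ℝ)) := by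
  have hr : (fun t => v t - harmonicSignal b z t - t ^ (-(1 / 2 : ℝ)) * ‖z‖ ^ 2)
      =O[atTop] fun t => t ^ (-1 : ℝ) := hv
  have hhalf : (fun t : ℝ => t ^ (-(1 / 2 : ℝ))) =O[atTop] fun t => t ^ (-(1 / 2 : ℝ)) :=
    isBigO_refl _ _
  have hv_err : (fun t => v t - harmonicSignal b z t) =O[atTop] fun t => t ^ (-(1 / 2 : ℝ)) :=
    ((hr.trans (rpow_isBigO_rpow_of_le (by norm_num))).add
      (hhalf.const_mul_left (‖z‖ ^ 2))).congr_left fun t => by ring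
  have hztilde : (fun t => ztilde t - z) =O[atTop] fun t => t ^ (-(1 / 2 : ℝ)) := by
    simp only [hzt]
    exact isBigO_twoPointInversion_sub hτ z hv_err (hv_err.comp_add_const_rpow τ)
  have hnorm :
      (fun t => ‖z‖ ^ 2 - ‖ztilde t‖ ^ 2) =O[atTop] fun t => t ^ (-(1 / 2 : ℝ)) :=
    hztilde.norm_sq_sub_norm_sq ((tendsto_rpow_neg_atTop (by norm_num)).isBigO_one ℝ)
  have hW₁_err : (fun t => W₁ t - harmonicSignal b z t) =O[atTop] fun t => t ^ (-1 : ℝ) :=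
    (hr.add (hhalf.mul_atTop_rpow_of_isBigO_rpow _ _ _ hnorm (by norm_num))).congr_left
      fun t => by rw [hW₁]; simp only [Pi.mul_apply]; ring
  have hW₂_err :
      (fun t => W₂ t - harmonicSignal b z (t + τ)) =O[atTop] fun t => t ^ (-1 : ℝ) :=
    ((hr.comp_add_const_rpow τ).add ((hhalf.comp_add_const_rpow τ).mul_atTop_rpow_of_isBigO_rpow
      _ _ _ hnorm (by norm_num))).congr_left
      fun t => by rw [hW₂]; simp only [Pi.mul_apply]; ring
  refine ⟨hztilde, ?_⟩
  simp only [hzh]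
  exact isBigO_twoPointInversion_sub hτ z hW₁_err hW₂_err
end

section
/- Let n ≥ 1, let b be a nonzero real number, and let a, c, d : Fin n → ℂ (indexed j = 1, …, n). If the function t ↦ Σ_{j=1}^{n} (a_j·e^{ibt} + c_j·e^{−ibt})·t^{1−j} + Σ_{j=1}^{n} d_j·t^{1/2−j} is o(t^{1/2−n}) as t → ∞, then a_j = c_j = d_j = 0 for all j = 1, …, n. -/
/-!
With `φ t = t ^ (-1/2)` the combination is `∑_{k < 2n} φ(t)^k g_k(t)`, where
`g_{2j}(t) = a_j e^{ibt} + c_j e^{-ibt}` and `g_{2j+1} = d_j`. All `g_k` are continuous and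
`2π/b`-periodic, hence bounded, so the whole tail after `g_0` is `O(φ)`; therefore `g_0(t) → 0`,
and a periodic function with a limit at infinity is constant, so `g_0 = 0`. Dividing by `φ` and
inducting kills every `g_k`. Finally `a e^{ibt} + c e^{-ibt} ≡ 0` forces `a = c = 0`, by evaluating
at `t = 0` and `t = π/(2b)`.
-/

open Filter Asymptotics Function Finset Topology Complex

theorem Function.Periodic.eq_of_tendsto_atTop {X : Type*} [TopologicalSpace X] [T2Space X]
    {f : ℝ → X} {p : ℝ} {y : X} (hf : Periodic f p) (hp : p ≠ 0)
    (h : Tendsto f atTop (𝓝 y)) (x : ℝ) : f x = y := by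
  have habs : Periodic f |p| := by
    rcases abs_choice p with hp' | hp' <;> rw [hp']
    exacts [hf, hf.neg]
  have hshift : Tendsto (fun k : ℕ => x + k * |p|) atTop atTop :=
    tendsto_atTop_add_const_left _ x
      (tendsto_natCast_atTop_atTop.atTop_mul_const (abs_pos.mpr hp))
  refine tendsto_nhds_unique tendsto_const_nhds ((h.comp hshift).congr fun k => ?_)
  exact habs.nat_mul k x

theorem Finset.sum_range_two_mul {M : Type*} [AddCommMonoid M] (f : ℕ → M) (n : ℕ) :
    ∑ k ∈ range (2 * n), f k = ∑ j ∈ range n, (f (2 * j) + f (2 * j + 1)) := by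
  induction n with
  | zero => simp
  | succ n ih =>
    rw [mul_add, mul_one, sum_range_succ, sum_range_succ, sum_range_succ, ih, add_assoc]

theorem periodic_mul_exp_add_mul_exp (a c : ℂ) {b : ℝ} (hb : b ≠ 0) :
    Periodic (fun t : ℝ => a * exp (I * (b * t)) + c * exp (-(I * (b * t)))) (2 * Real.pi / b) := by
  have hb' : (b : ℂ) ≠ 0 := ofReal_ne_zero.mpr hb
  intro t
  have hshift : I * (b * ↑(t + 2 * Real.pi / b)) = I * (b * t) + 2 * Real.pi * I := by
    push_cast
    field_simp
  simp only [hshift, neg_add', exp_periodic _, exp_periodic.sub_eq]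

theorem eq_zero_of_mul_exp_add_mul_exp_eq_zero {a c : ℂ} {b : ℝ} (hb : b ≠ 0)
    (h : ∀ t : ℝ, a * exp (I * (b * t)) + c * exp (-(I * (b * t))) = 0) : a = 0 ∧ c = 0 := by
  have hb' : (b : ℂ) ≠ 0 := ofReal_ne_zero.mpr hb
  have h₀ : a + c = 0 := by simpa using h 0
  have hquarter : I * (b * ↑(Real.pi / (2 * b))) = Real.pi / 2 * I := by
    push_cast
    field_simp
  have h₁ : I * (a - c) = 0 := by
    have := h (Real.pi / (2 * b))
    rw [hquarter, ← neg_mul, ← neg_div, exp_pi_div_two_mul_I, exp_neg_pi_div_two_mul_I] at this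
    linear_combination this
  have hac : a = c := sub_eq_zero.mp ((mul_eq_zero.mp h₁).resolve_left I_ne_zero)
  subst hac
  have ha : a = 0 := by linear_combination h₀ / 2
  exact ⟨ha, ha⟩

section Normed

variable {E : Type*} [NormedAddCommGroup E]

theorem Function.Periodic.isBigO_one_of_continuous {f : ℝ → E} {p : ℝ} {l : Filter ℝ}
    (hf : Periodic f p) (hp : p ≠ 0) (hc : Continuous f) : f =O[l] (fun _ => (1 : ℝ)) := by
  obtain ⟨C, hC⟩ := (hf.isBounded_of_continuous hp hc).exists_norm_le
  exact IsBigO.of_bound C (Eventually.of_forall fun t => by simpa using hC _ ⟨t, rfl⟩)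

variable [NormedSpace ℝ E]

theorem Asymptotics.IsLittleO.of_smul_mul {α : Type*} {l : Filter α} {φ v : α → ℝ} {u : α → E}
    (hφ : ∀ᶠ t in l, φ t ≠ 0) (h : (fun t => φ t • u t) =o[l] fun t => φ t * v t) :
    u =o[l] v := by
  refine ((isBigO_refl (fun t => (φ t)⁻¹) l).smul_isLittleO h).congr' ?_ ?_ <;>
    filter_upwards [hφ] with t ht
  · rw [smul_smul, inv_mul_cancel₀ ht, one_smul]
  · rw [smul_eq_mul, inv_mul_cancel_left₀ ht]

theorem eq_zero_of_sum_pow_smul_isLittleO {φ : ℝ → ℝ} (hφ : Tendsto φ atTop (𝓝 0))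
    (hφ0 : ∀ᶠ t in atTop, φ t ≠ 0) {p : ℝ} (hp : p ≠ 0) (m : ℕ) (g : ℕ → ℝ → E)
    (hc : ∀ k, Continuous (g k)) (hper : ∀ k, Periodic (g k) p)
    (h : (fun t => ∑ k ∈ range (m + 1), φ t ^ k • g k t) =o[atTop] fun t => φ t ^ m) :
    ∀ k ≤ m, g k = 0 := by
  induction m generalizing g with
  | zero =>
    intro k hk
    rw [Nat.le_zero.mp hk]
    refine funext <| (hper 0).eq_of_tendsto_atTop hp ((isLittleO_one_iff ℝ).mp ?_)
    simpa using h
  | succ m ih =>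
    set T : ℝ → E := fun t => ∑ k ∈ range (m + 1), φ t ^ k • g (k + 1) t
    have hsplit : ∀ t, ∑ k ∈ range (m + 2), φ t ^ k • g k t = g 0 t + φ t • T t := by
      intro t
      simp only [T, sum_range_succ' _ (m + 1), smul_sum, smul_smul, pow_succ', pow_zero, one_smul]
      exact add_comm _ _
    have hT : T =O[atTop] fun _ => (1 : ℝ) := by
      refine IsBigO.fun_sum fun k _ => ?_
      simpa using ((hφ.pow k).isBigO_one (F := ℝ)).smul
        ((hper (k + 1)).isBigO_one_of_continuous hp (hc (k + 1)))
    have hφT : Tendsto (fun t => φ t • T t) atTop (𝓝 0) :=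
      ((isBigO_refl φ atTop).smul hT).trans_tendsto (by simpa using hφ)
    have hsum : Tendsto (fun t => g 0 t + φ t • T t) atTop (𝓝 0) := by
      simpa only [hsplit] using h.trans_tendsto (by simpa using hφ.pow (m + 1))
    have hg0 : g 0 = 0 := by
      have hlim : Tendsto (g 0) atTop (𝓝 0) := by
        simpa only [add_sub_cancel_right, sub_zero] using hsum.sub hφT
      exact funext fun x => (hper 0).eq_of_tendsto_atTop hp hlim x
    have hTo : T =o[atTop] fun t => φ t ^ m := by
      refine IsLittleO.of_smul_mul hφ0 ?_
      simpa only [hsplit, hg0, Pi.zero_apply, zero_add, pow_succ'] using h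
    rintro (_ | k) hk
    · exact hg0
    · exact ih (fun k => g (k + 1)) (fun k => hc _) (fun k => hper _) hTo k (by omega)

end Normed

theorem Real.rpow_neg_half_pow {t : ℝ} (ht : 0 ≤ t) (k : ℕ) :
    (t ^ (-(1 / 2 : ℝ))) ^ k = t ^ (-(k / 2 : ℝ)) := by
  rw [← Real.rpow_mul_natCast ht]
  ring_nf

section OscHalf

variable {n : ℕ} (b : ℝ) (a c d : Fin n → ℂ)

/-- The coefficient of `(t ^ (-1/2)) ^ k`; `extend Fin.val v 0` is `v` extended by zero to `ℕ`. -/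
noncomputable def oscHalfCoeff (k : ℕ) (t : ℝ) : ℂ :=
  if Even k then
    extend Fin.val a 0 (k / 2) * exp (I * (b * t))
      + extend Fin.val c 0 (k / 2) * exp (-(I * (b * t)))
  else extend Fin.val d 0 (k / 2)

theorem oscHalfCoeff_two_mul (j : Fin n) (t : ℝ) :
    oscHalfCoeff b a c d (2 * j) t = a j * exp (I * (b * t)) + c j * exp (-(I * (b * t))) := by
  simp only [oscHalfCoeff, if_pos (even_two_mul _), Nat.mul_div_cancel_left _ two_pos,
    Fin.val_injective.extend_apply]

theorem oscHalfCoeff_two_mul_add_one (j : Fin n) (t : ℝ) :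
    oscHalfCoeff b a c d (2 * j + 1) t = d j := by
  simp only [oscHalfCoeff, if_neg (Nat.not_even_two_mul_add_one _),
    show (2 * (j : ℕ) + 1) / 2 = j by omega, Fin.val_injective.extend_apply]

theorem continuous_oscHalfCoeff (k : ℕ) : Continuous (oscHalfCoeff b a c d k) := by
  unfold oscHalfCoeff
  split_ifs <;> fun_prop

theorem periodic_oscHalfCoeff (hb : b ≠ 0) (k : ℕ) :
    Periodic (oscHalfCoeff b a c d k) (2 * Real.pi / b) := by
  unfold oscHalfCoeff
  split_ifs
  exacts [periodic_mul_exp_add_mul_exp _ _ hb, fun _ => rfl]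

theorem sum_pow_smul_oscHalfCoeff {t : ℝ} (ht : 0 < t) :
    ∑ k ∈ range (2 * n), (t ^ (-(1 / 2 : ℝ))) ^ k • oscHalfCoeff b a c d k t =
      (∑ j : Fin n, (a j * exp (I * (b * t)) + c j * exp (-(I * (b * t))))
          * ((t ^ ((1 : ℝ) - ((j : ℕ) + 1)) : ℝ) : ℂ))
        + ∑ j : Fin n, d j * ((t ^ ((1 / 2 : ℝ) - ((j : ℕ) + 1)) : ℝ) : ℂ) := by
  rw [sum_range_two_mul, sum_add_distrib, sum_range, sum_range]
  congr 1 <;> refine sum_congr rfl fun j _ => ?_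
  · rw [oscHalfCoeff_two_mul, Real.rpow_neg_half_pow ht.le, real_smul, mul_comm]
    congr 3
    push_cast
    ring
  · rw [oscHalfCoeff_two_mul_add_one, Real.rpow_neg_half_pow ht.le, real_smul, mul_comm]
    congr 3
    push_cast
    ring

end OscHalf

/-- Asymptotic linear independence of `e^{ibt}·t^{1-j}`, `e^{-ibt}·t^{1-j}` and the
half-integer orders `t^{1/2-j}` for `j = 1, …, n` (here `a j`, `c j`, `d j` with
`j : Fin n` denote the coefficients of order `j+1`): if the combination is
`o(t^{1/2-n})` as `t → ∞`, all coefficients vanish. -/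
theorem asymptotic_linear_independence_osc_half
    (n : ℕ) (hn : 1 ≤ n) (b : ℝ) (hb : b ≠ 0) (a c d : Fin n → ℂ)
    (h : (fun t : ℝ =>
          (∑ j : Fin n,
            (a j * Complex.exp (Complex.I * (b * t))
              + c j * Complex.exp (-(Complex.I * (b * t))))
            * ((t ^ ((1 : ℝ) - ((j : ℕ) + 1)) : ℝ) : ℂ))
          + ∑ j : Fin n, d j * ((t ^ ((1 / 2 : ℝ) - ((j : ℕ) + 1)) : ℝ) : ℂ))
        =o[atTop] fun t : ℝ => t ^ ((1 / 2 : ℝ) - n)) :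
    ∀ j : Fin n, a j = 0 ∧ c j = 0 ∧ d j = 0 := by
  obtain ⟨N, rfl⟩ : ∃ N, n = N + 1 := ⟨n - 1, by omega⟩
  have hsum : (fun t : ℝ => ∑ k ∈ range (2 * N + 1 + 1),
      (t ^ (-(1 / 2 : ℝ))) ^ k • oscHalfCoeff b a c d k t) =o[atTop]
      fun t : ℝ => (t ^ (-(1 / 2 : ℝ))) ^ (2 * N + 1) := by
    refine h.congr' ?_ ?_ <;> filter_upwards [eventually_gt_atTop 0] with t ht
    · exact (sum_pow_smul_oscHalfCoeff b a c d ht).symm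
    · rw [Real.rpow_neg_half_pow ht.le]
      congr 1
      push_cast
      ring
  have hg := eq_zero_of_sum_pow_smul_isLittleO (tendsto_rpow_neg_atTop (by norm_num))
    ((eventually_gt_atTop 0).mono fun t ht => (Real.rpow_pos_of_pos ht _).ne')
    (div_ne_zero (by positivity) hb) _ _ (continuous_oscHalfCoeff b a c d)
    (periodic_oscHalfCoeff b a c d hb) hsum
  intro j
  obtain ⟨ha, hc⟩ := eq_zero_of_mul_exp_add_mul_exp_eq_zero hb fun t => by
    simpa only [oscHalfCoeff_two_mul, Pi.zero_apply] using congrFun (hg (2 * j) (by omega)) t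
  refine ⟨ha, hc, ?_⟩
  simpa only [oscHalfCoeff_two_mul_add_one, Pi.zero_apply] using
    congrFun (hg (2 * j + 1) (by omega)) 0
end
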